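/- Let {[A_k]}_{k=1}^∞ be pairwise disjoint equivalence classes in [𝓕] ⊆ 𝒫(ℕ)/𝓝 (i.e., A_j ∩ A_k ∈ 𝓝 for j ≠ k and each A_k ∈ 𝓕). Then representatives A_k ∈ 𝓕 can be chosen pairwise disjoint with A := ⋃_k A_k ∈ 𝓕 and ν(A) = Σ_k ν(A_k), and [A] is the least upper bound of {[A_k]} in the Boolean quotient 𝒫(ℕ)/𝓝. -/
import Mathlib


open Filter Set

/-- Partial average ν_N(A) = |A ∩ {1,…,N}| / N. -/
noncomputable def avg (A : Set ℕ) (N : ℕ) : ℝ := ((A ∩ Set.Icc 1 N).ncard : ℝ) / N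

/-- Upper Cesàro limit ν⁺. -/
noncomputable def nuPlus (A : Set ℕ) : ℝ := Filter.limsup (avg A) Filter.atTop

/-- Lower Cesàro limit ν⁻. -/
noncomputable def nuMinus (A : Set ℕ) : ℝ := Filter.liminf (avg A) Filter.atTop

/-- ν(A), defined as ν⁺(A); equals the Cesàro limit whenever it exists. -/
noncomputable def nu (A : Set ℕ) : ℝ := nuPlus A

/-- A ∈ 𝓕 : the Cesàro limit exists (and then equals ν(A) = ν⁺(A)). -/
def memF (A : Set ℕ) : Prop := Filter.Tendsto (avg A) Filter.atTop (nhds (nu A))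

/-- A ∈ 𝓝 : null set, Cesàro limit exists and equals 0. -/
def IsNull (A : Set ℕ) : Prop := Filter.Tendsto (avg A) Filter.atTop (nhds 0)

lemma finAI (A : Set ℕ) (N : ℕ) : (A ∩ Set.Icc 1 N).Finite :=
  (Set.finite_Icc 1 N).inter_of_right _

lemma avg_nonneg (A : Set ℕ) (N : ℕ) : 0 ≤ avg A N := by unfold avg; positivity

lemma avg_mono {A B : Set ℕ} (h : A ⊆ B) (N : ℕ) : avg A N ≤ avg B N := by
  unfold avg
  have h2 := Set.ncard_le_ncard (Set.inter_subset_inter_left (Set.Icc 1 N) h) (finAI B N)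
  have h3 : ((A ∩ Set.Icc 1 N).ncard : ℝ) ≤ ((B ∩ Set.Icc 1 N).ncard : ℝ) := by exact_mod_cast h2
  gcongr

lemma ncard_Icc (N : ℕ) : (Set.Icc 1 N).ncard = N := by
  rw [show (Set.Icc 1 N) = ↑(Finset.Icc 1 N) by simp, Set.ncard_coe_finset, Nat.card_Icc]
  omega

lemma avg_le_one (A : Set ℕ) (N : ℕ) : avg A N ≤ 1 := by
  rcases Nat.eq_zero_or_pos N with h | h
  · simp [avg, h]
  · unfold avg
    rw [div_le_one (by exact_mod_cast h)]
    have : (A ∩ Set.Icc 1 N).ncard ≤ N := by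
      calc (A ∩ Set.Icc 1 N).ncard ≤ (Set.Icc 1 N).ncard :=
            Set.ncard_le_ncard inter_subset_right (Set.finite_Icc 1 N)
        _ = N := ncard_Icc N
    exact_mod_cast this

lemma avg_union_le (A B : Set ℕ) (N : ℕ) : avg (A ∪ B) N ≤ avg A N + avg B N := by
  unfold avg
  rw [← add_div]
  gcongr
  rw [Set.union_inter_distrib_right]
  calc ((A ∩ Set.Icc 1 N ∪ B ∩ Set.Icc 1 N).ncard : ℝ)
      ≤ ((A ∩ Set.Icc 1 N).ncard + (B ∩ Set.Icc 1 N).ncard : ℕ) := by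
        exact_mod_cast Set.ncard_union_le _ _
    _ = _ := by push_cast; ring

lemma avg_union_disjoint {A B : Set ℕ} (h : Disjoint A B) (N : ℕ) :
    avg (A ∪ B) N = avg A N + avg B N := by
  unfold avg
  rw [← add_div, Set.union_inter_distrib_right,
    Set.ncard_union_eq (h.mono inter_subset_left inter_subset_left) (finAI A N) (finAI B N)]
  push_cast; ring

lemma tendsto_zero_squeeze {f g : ℕ → ℝ} (h0 : ∀ N, 0 ≤ f N) (h : ∀ N, f N ≤ g N)
    (hg : Tendsto g atTop (nhds 0)) : Tendsto f atTop (nhds 0) :=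
  tendsto_of_tendsto_of_tendsto_of_le_of_le tendsto_const_nhds hg
    (fun N => h0 N) (fun N => h N)

lemma isNull_mono {A B : Set ℕ} (h : A ⊆ B) (hB : IsNull B) : IsNull A :=
  tendsto_zero_squeeze (avg_nonneg A) (fun N => avg_mono h N) hB

lemma isNull_union {A B : Set ℕ} (hA : IsNull A) (hB : IsNull B) : IsNull (A ∪ B) := by
  have := hA.add hB
  rw [add_zero] at this
  exact tendsto_zero_squeeze (avg_nonneg _) (fun N => avg_union_le A B N) this

lemma isNull_empty : IsNull (∅ : Set ℕ) := by
  have : ∀ N, avg (∅ : Set ℕ) N = 0 := fun N => by simp [avg]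
  simpa [IsNull, funext this] using tendsto_const_nhds

lemma isNull_finite {A : Set ℕ} (h : A.Finite) : IsNull A := by
  have hb : ∀ N, avg A N ≤ (A.ncard : ℝ) / N := by
    intro N
    unfold avg
    have h2 : ((A ∩ Set.Icc 1 N).ncard : ℝ) ≤ (A.ncard : ℝ) := by
      exact_mod_cast Set.ncard_le_ncard inter_subset_left h
    gcongr
  exact tendsto_zero_squeeze (avg_nonneg A) hb (tendsto_const_div_atTop_nhds_zero_nat _)

lemma avg_symmDiff_bound (A B : Set ℕ) (N : ℕ) :
    |avg A N - avg B N| ≤ avg (symmDiff A B) N := by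
  rw [abs_sub_le_iff]
  constructor
  · have h1 : A ⊆ B ∪ symmDiff A B := by
      intro x hx
      by_cases hxB : x ∈ B
      · exact Or.inl hxB
      · exact Or.inr (Or.inl ⟨hx, hxB⟩)
    have := (avg_mono h1 N).trans (avg_union_le B _ N)
    linarith
  · have h1 : B ⊆ A ∪ symmDiff A B := by
      intro x hx
      by_cases hxA : x ∈ A
      · exact Or.inl hxA
      · exact Or.inr (Or.inr ⟨hx, hxA⟩)
    have := (avg_mono h1 N).trans (avg_union_le A _ N)
    linarith

lemma tendsto_avg_congr {A B : Set ℕ} (h : IsNull (symmDiff A B)) {L : ℝ}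
    (hA : Tendsto (avg A) atTop (nhds L)) : Tendsto (avg B) atTop (nhds L) := by
  have hlo : Tendsto (fun N => avg A N - avg (symmDiff A B) N) atTop (nhds L) := by
    simpa using hA.sub h
  have hhi : Tendsto (fun N => avg A N + avg (symmDiff A B) N) atTop (nhds L) := by
    simpa using hA.add h
  refine tendsto_of_tendsto_of_tendsto_of_le_of_le hlo hhi ?_ ?_
  · intro N
    have h2 := avg_symmDiff_bound A B N
    rw [abs_sub_le_iff] at h2
    show avg A N - avg (symmDiff A B) N ≤ avg B N
    linarith [h2.1]
  · intro N
    have h2 := avg_symmDiff_bound A B N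
    rw [abs_sub_le_iff] at h2
    show avg B N ≤ avg A N + avg (symmDiff A B) N
    linarith [h2.2]

lemma nu_eq_of_tendsto {A : Set ℕ} {L : ℝ} (h : Tendsto (avg A) atTop (nhds L)) :
    nu A = L := h.limsup_eq

lemma memF_of_tendsto {A : Set ℕ} {L : ℝ} (h : Tendsto (avg A) atTop (nhds L)) :
    memF A := by rw [memF, nu_eq_of_tendsto h]; exact h

lemma isNull_biUnion {C : ℕ → Set ℕ} (K : ℕ) (h : ∀ j < K, IsNull (C j)) :
    IsNull (⋃ j ∈ Finset.range K, C j) := by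
  induction K with
  | zero => simpa using isNull_empty
  | succ K ih =>
      rw [Finset.range_add_one]
      simp only [Finset.mem_insert, Set.iUnion_iUnion_eq_or_left]
      exact isNull_union (h K (Nat.lt_succ_self K)) (ih (fun j hj => h j (hj.trans (Nat.lt_succ_self K))))

lemma tendsto_avg_biUnion {C : ℕ → Set ℕ} {l : ℕ → ℝ}
    (hd : Pairwise (Function.onFun Disjoint C))
    (h : ∀ j, Tendsto (avg (C j)) atTop (nhds (l j))) (K : ℕ) :
    Tendsto (avg (⋃ j ∈ Finset.range K, C j)) atTop
      (nhds (∑ j ∈ Finset.range K, l j)) := by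
  induction K with
  | zero =>
      simp only [Finset.range_zero, Finset.notMem_empty, Set.iUnion_of_empty,
        Set.iUnion_empty, Finset.sum_empty]
      exact isNull_empty
  | succ K ih =>
      have hdisj : Disjoint (C K) (⋃ j ∈ Finset.range K, C j) := by
        rw [Set.disjoint_iff_inter_eq_empty]
        ext x
        simp only [Set.mem_inter_iff, Set.mem_iUnion, Finset.mem_range, Set.mem_empty_iff_false,
          iff_false, not_and, not_exists]
        rintro hK j hj hjx
        exact (hd (Nat.ne_of_gt hj)).ne_of_mem hK hjx rfl
      have heq : ∀ N, avg (⋃ j ∈ Finset.range (K+1), C j) N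
          = avg (C K) N + avg (⋃ j ∈ Finset.range K, C j) N := by
        intro N
        rw [show (⋃ j ∈ Finset.range (K+1), C j) = C K ∪ ⋃ j ∈ Finset.range K, C j by
          rw [Finset.range_add_one]; simp [Set.iUnion_iUnion_eq_or_left]]
        exact avg_union_disjoint hdisj N
      rw [funext heq, Finset.sum_range_succ, add_comm]
      exact (h K).add ih

lemma avg_le_of_diff (U V : Set ℕ) (N : ℕ) : avg U N ≤ avg V N + avg (U \ V) N := by
  have h : U ⊆ V ∪ (U \ V) := by
    intro x hx
    by_cases hxV : x ∈ V
    · exact Or.inl hxV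
    · exact Or.inr ⟨hx, hxV⟩
  exact (avg_mono h N).trans (avg_union_le _ _ N)

lemma avg_le_of_subset_Iic {C : Set ℕ} {M : ℕ} (h : C ⊆ Set.Iic M) (N : ℕ) :
    avg C N ≤ (M : ℝ) / N := by
  unfold avg
  have h1 : C ∩ Set.Icc 1 N ⊆ Set.Icc 1 M := fun x hx => ⟨hx.2.1, h hx.1⟩
  have h2 : (C ∩ Set.Icc 1 N).ncard ≤ M :=
    (Set.ncard_le_ncard h1 (Set.finite_Icc 1 M)).trans_eq (ncard_Icc M)
  have h3 : ((C ∩ Set.Icc 1 N).ncard : ℝ) ≤ (M : ℝ) := by exact_mod_cast h2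
  gcongr

lemma exists_uniform_threshold {f : ℕ → ℕ → ℝ} {l : ℕ → ℝ}
    (h : ∀ i, Tendsto (f i) atTop (nhds (l i))) {ε : ℝ} (hε : 0 < ε) (M : ℕ) :
    ∃ t, ∀ N, t ≤ N → ∀ i ≤ M, |f i N - l i| ≤ ε := by
  have hev : ∀ᶠ N in atTop, ∀ i ∈ Finset.range (M+1), |f i N - l i| ≤ ε := by
    rw [Filter.eventually_all_finset]
    intro i _
    have : ∀ᶠ N in atTop, dist (f i N) (l i) < ε := (h i).eventually (Metric.ball_mem_nhds _ hε)
    filter_upwards [this] with N hN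
    rw [Real.dist_eq] at hN
    exact hN.le
  obtain ⟨t, ht⟩ := Filter.eventually_atTop.1 hev
  exact ⟨t, fun N hN i hi => ht N hN i (Finset.mem_range.2 (Nat.lt_succ_of_le hi))⟩

theorem stmt19 (A : ℕ → Set ℕ) (hF : ∀ k, memF (A k))
    (hdisj : ∀ j k, j ≠ k → IsNull (A j ∩ A k)) :
    ∃ A' : ℕ → Set ℕ,
      (∀ k, memF (A' k)) ∧
      (∀ k, IsNull (symmDiff (A k) (A' k))) ∧
      Pairwise (Function.onFun Disjoint A') ∧
      memF (⋃ k, A' k) ∧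
      nu (⋃ k, A' k) = ∑' k, nu (A' k) ∧
      (∀ k, IsNull (A' k \ ⋃ i, A' i)) ∧
      (∀ B : Set ℕ, (∀ k, IsNull (A' k \ B)) → IsNull ((⋃ k, A' k) \ B)) := by
  classical
  set B : ℕ → Set ℕ := fun k => A k \ ⋃ j ∈ Finset.range k, A j with hBdef
  have hBsub : ∀ k, B k ⊆ A k := fun k => Set.diff_subset
  have hsymmAB : ∀ k, IsNull (symmDiff (A k) (B k)) := by
    intro k
    have h1 : symmDiff (A k) (B k) ⊆ ⋃ j ∈ Finset.range k, (A j ∩ A k) := by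
      intro x hx
      rcases Set.mem_symmDiff.1 hx with ⟨hxA, hxB⟩ | ⟨hxB, hxA⟩
      · have : x ∈ ⋃ j ∈ Finset.range k, A j := by
          by_contra hc
          exact hxB ⟨hxA, hc⟩
        simp only [Set.mem_iUnion] at this ⊢
        obtain ⟨j, hj, hxj⟩ := this
        exact ⟨j, hj, hxj, hxA⟩
      · exact absurd (hBsub k hxB) hxA
    exact isNull_mono h1 (isNull_biUnion k (fun j hj => hdisj j k (Nat.ne_of_lt hj)))
  have hBF : ∀ k, Tendsto (avg (B k)) atTop (nhds (nu (A k))) :=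
    fun k => tendsto_avg_congr (hsymmAB k) (hF k)
  have hBdisj : Pairwise (Function.onFun Disjoint B) := by
    have key : ∀ j k, j < k → Disjoint (B j) (B k) := by
      intro j k hjk
      rw [Set.disjoint_left]
      intro x hxj hxk
      exact hxk.2 (Set.mem_biUnion (Finset.mem_range.2 hjk) (hBsub j hxj))
    intro j k hjk
    rcases lt_or_gt_of_ne hjk with h | h
    · exact key j k h
    · exact (key k j h).symm
  have hlnn : ∀ k, 0 ≤ nu (A k) := fun k => ge_of_tendsto' (hBF k) (fun N => avg_nonneg _ N)
  set U : ℕ → Set ℕ := fun K => ⋃ j ∈ Finset.range K, B j with hUdef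
  set s : ℕ → ℝ := fun K => ∑ j ∈ Finset.range K, nu (A j) with hsdef
  have hUF : ∀ K, Tendsto (avg (U K)) atTop (nhds (s K)) :=
    fun K => tendsto_avg_biUnion hBdisj hBF K
  have hsle1 : ∀ K, s K ≤ 1 := fun K => le_of_tendsto' (hUF K) (fun N => avg_le_one _ N)
  have hsum : Summable (fun k => nu (A k)) := summable_of_sum_range_le hlnn hsle1
  set L : ℝ := ∑' k, nu (A k) with hLdef
  have hsL : Tendsto s atTop (nhds L) := hsum.hasSum.tendsto_sum_nat
  have hsleL : ∀ K, s K ≤ L := fun K => Summable.sum_le_tsum _ (fun i _ => hlnn i) hsum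
  have hsmono : Monotone s := by
    intro a b hab
    exact Finset.sum_le_sum_of_subset_of_nonneg (Finset.range_subset_range.2 hab)
      (fun i _ _ => hlnn i)
  -- thresholds
  have pick : ∀ m p : ℕ, ∃ t : ℕ, p < t ∧ 2^(m+5) * p ≤ t ∧
      ∀ N, t ≤ N → ∀ i ≤ m + 3, |avg (U i) N - s i| ≤ (1/2:ℝ)^m := by
    intro m p
    obtain ⟨t0, ht0⟩ := exists_uniform_threshold hUF
      (pow_pos (by norm_num : (0:ℝ) < 1/2) m) (m+3)
    refine ⟨max t0 (max (p+1) (2^(m+5) * p)), ?_, ?_, ?_⟩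
    · calc p < p + 1 := Nat.lt_succ_self p
        _ ≤ _ := le_trans (le_max_left _ _) (le_max_right _ _)
    · exact le_trans (le_max_right _ _) (le_max_right _ _)
    · intro N hN i hi
      exact ht0 N (le_trans (le_max_left _ _) hN) i hi
  set n : ℕ → ℕ := fun m =>
    Nat.rec (Classical.choose (pick 0 0)) (fun m' prev => Classical.choose (pick (m'+1) prev)) m
    with hndef
  have hn0 : 0 < n 0 ∧ ∀ N, n 0 ≤ N → ∀ i ≤ 3, |avg (U i) N - s i| ≤ (1/2:ℝ)^0 := by
    have h := Classical.choose_spec (pick 0 0)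
    exact ⟨h.1, fun N hN i hi => h.2.2 N hN i hi⟩
  have hnsucc : ∀ m, n m < n (m+1) ∧ 2^(m+6) * n m ≤ n (m+1) ∧
      ∀ N, n (m+1) ≤ N → ∀ i ≤ m + 4, |avg (U i) N - s i| ≤ (1/2:ℝ)^(m+1) := by
    intro m
    have h := Classical.choose_spec (pick (m+1) (n m))
    exact ⟨h.1, h.2.1, fun N hN i hi => h.2.2 N hN i hi⟩
  have hnmono : StrictMono n := strictMono_nat_of_lt_succ (fun m => (hnsucc m).1)
  have hnpos : ∀ m, 0 < n m := fun m => lt_of_lt_of_le hn0.1 (hnmono.monotone (Nat.zero_le m))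
  -- disjoint representatives with trimmed initial segments
  set A' : ℕ → Set ℕ := fun k => B k ∩ Set.Ioi (n k) with hA'def
  have hA'sub : ∀ k, A' k ⊆ B k := fun k => Set.inter_subset_left
  have hsymmBA' : ∀ k, IsNull (symmDiff (B k) (A' k)) := by
    intro k
    have h1 : symmDiff (B k) (A' k) ⊆ Set.Iic (n k) := by
      intro x hx
      rcases Set.mem_symmDiff.1 hx with ⟨hxB, hxA⟩ | ⟨hxA, hxB⟩
      · by_contra hc
        exact hxA ⟨hxB, by simpa using Nat.lt_of_not_le (fun h => hc (Set.mem_Iic.2 h))⟩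
      · exact absurd (hA'sub k hxA) hxB
    exact isNull_mono h1 (isNull_finite (Set.finite_Iic _))
  have hA'F : ∀ k, Tendsto (avg (A' k)) atTop (nhds (nu (A k))) :=
    fun k => tendsto_avg_congr (hsymmBA' k) (hBF k)
  have hnuA' : ∀ k, nu (A' k) = nu (A k) := fun k => nu_eq_of_tendsto (hA'F k)
  have hA'disj : Pairwise (Function.onFun Disjoint A') :=
    fun j k h => ((hBdisj h).mono (hA'sub j) (hA'sub k))
  set V : ℕ → Set ℕ := fun K => ⋃ j ∈ Finset.range K, A' j with hVdef
  have hVF : ∀ K, Tendsto (avg (V K)) atTop (nhds (s K)) :=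
    fun K => tendsto_avg_biUnion hA'disj hA'F K
  set T : Set ℕ := ⋃ k, A' k with hTdef
  have hVsubT : ∀ K, V K ⊆ T := by
    intro K x hx
    simp only [hVdef, Set.mem_iUnion] at hx
    obtain ⟨j, _, hxj⟩ := hx
    exact Set.mem_iUnion.2 ⟨j, hxj⟩
  have hVU : ∀ K, V K ⊆ U K := by
    intro K x hx
    simp only [hVdef, Set.mem_iUnion] at hx
    obtain ⟨j, hj, hxj⟩ := hx
    exact Set.mem_biUnion hj (hA'sub j hxj)
  have hVmono : ∀ {a b : ℕ}, a ≤ b → V a ⊆ V b := by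
    intro a b hab x hx
    simp only [hVdef, Set.mem_iUnion, Finset.mem_range] at hx ⊢
    obtain ⟨j, hj, hxj⟩ := hx
    exact ⟨j, lt_of_lt_of_le hj hab, hxj⟩
  -- key interval estimate
  have key : ∀ k N, n (k+1) ≤ N → N < n (k+2) →
      |avg T N - L| ≤ (L - s (k+1)) + 2 * (1/2:ℝ)^k := by
    intro k N h1 h2
    have hNpos : (0:ℝ) < N := by
      exact_mod_cast lt_of_lt_of_le (hnpos (k+1)) h1
    have e1 : T ∩ Set.Icc 1 N = V (k+2) ∩ Set.Icc 1 N := by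
      ext x
      constructor
      · rintro ⟨hx, hxI⟩
        obtain ⟨j, hxj⟩ := Set.mem_iUnion.1 hx
        refine ⟨?_, hxI⟩
        by_cases hj : j < k + 2
        · exact Set.mem_biUnion (Finset.mem_range.2 hj) hxj
        · exfalso
          push_neg at hj
          have hgt : n j < x := hxj.2
          have : n (k+2) ≤ n j := hnmono.monotone hj
          have hxN : x ≤ N := hxI.2
          omega
      · rintro ⟨hx, hxI⟩
        exact ⟨hVsubT (k+2) hx, hxI⟩
    have e1' : avg T N = avg (V (k+2)) N := by unfold avg; rw [e1]
    have hthr := (hnsucc k).2.2 N h1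
    -- upper bound
    have up : avg T N ≤ L + (1/2:ℝ)^(k+1) := by
      rw [e1']
      calc avg (V (k+2)) N ≤ avg (U (k+2)) N := avg_mono (hVU (k+2)) N
        _ ≤ s (k+2) + (1/2:ℝ)^(k+1) := by
            have := hthr (k+2) (by omega)
            rw [abs_le] at this
            linarith [this.2]
        _ ≤ L + (1/2:ℝ)^(k+1) := by linarith [hsleL (k+2)]
    -- lower bound
    have lo : s (k+1) - (1/2:ℝ)^(k+1) - (1/2:ℝ)^k ≤ avg T N := by
      rw [e1']
      have hm : avg (V (k+1)) N ≤ avg (V (k+2)) N := avg_mono (hVmono (by omega)) N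
      have hd : avg (U (k+1)) N ≤ avg (V (k+1)) N + avg (U (k+1) \ V (k+1)) N :=
        avg_le_of_diff _ _ N
      have hsubIic : U (k+1) \ V (k+1) ⊆ Set.Iic (n k) := by
        intro x hx
        obtain ⟨hxU, hxV⟩ := hx
        simp only [hUdef, Set.mem_iUnion, Finset.mem_range] at hxU
        obtain ⟨j, hj, hxj⟩ := hxU
        have hxA' : x ∉ A' j := fun hc =>
          hxV (Set.mem_biUnion (Finset.mem_range.2 hj) hc)
        have hxle : x ≤ n j := by
          by_contra hc
          exact hxA' ⟨hxj, by simpa using Nat.lt_of_not_le (fun h => hc (by omega))⟩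
        exact Set.mem_Iic.2 (le_trans hxle (hnmono.monotone (by omega)))
      have hsmall : avg (U (k+1) \ V (k+1)) N ≤ (1/2:ℝ)^k := by
        refine le_trans (avg_le_of_subset_Iic hsubIic N) ?_
        rw [div_le_iff₀ hNpos]
        have hcast : ((2:ℝ))^(k+6) * n k ≤ N := by
          exact_mod_cast le_trans (hnsucc k).2.1 h1
        have h2k : ((2:ℝ))^k * n k ≤ (2:ℝ)^(k+6) * n k := by
          have : ((2:ℝ))^k ≤ (2:ℝ)^(k+6) := by
            apply pow_le_pow_right₀ (by norm_num) (by omega)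
          nlinarith [Nat.cast_nonneg (α := ℝ) (n k)]
        have hpow : ((1:ℝ)/2)^k * (2:ℝ)^k = 1 := by
          rw [← mul_pow]; norm_num
        nlinarith [pow_pos (by norm_num : (0:ℝ) < 1/2) k,
          pow_pos (by norm_num : (0:ℝ) < 2) k]
      have hUlow : s (k+1) - (1/2:ℝ)^(k+1) ≤ avg (U (k+1)) N := by
        have := hthr (k+1) (by omega)
        rw [abs_le] at this
        linarith [this.1]
      linarith
    have hpowle : ((1:ℝ)/2)^(k+1) ≤ (1/2:ℝ)^k :=
      pow_le_pow_of_le_one (by norm_num) (by norm_num) (by omega)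
    have hpownn : (0:ℝ) ≤ (1/2:ℝ)^k := le_of_lt (pow_pos (by norm_num) k)
    rw [abs_le]
    constructor
    · linarith [hsleL (k+1)]
    · linarith [hsleL (k+1)]
  -- the union tends to L
  have hTF : Tendsto (avg T) atTop (nhds L) := by
    rw [Metric.tendsto_atTop]
    intro ε hε
    have hD : Tendsto (fun k => (L - s (k+1)) + 2 * (1/2:ℝ)^k) atTop (nhds 0) := by
      have h1 : Tendsto (fun k => s (k+1)) atTop (nhds L) :=
        hsL.comp (tendsto_add_atTop_nat 1)
      have h2 : Tendsto (fun k : ℕ => 2 * (1/2:ℝ)^k) atTop (nhds 0) := by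
        have := (tendsto_pow_atTop_nhds_zero_of_lt_one
          (by norm_num : (0:ℝ) ≤ 1/2) (by norm_num : (1/2:ℝ) < 1)).const_mul 2
        simpa using this
      have h3 : Tendsto (fun k : ℕ => (L - s (k+1)) + 2 * (1/2:ℝ)^k) atTop
          (nhds ((L - L) + 0)) :=
        (((tendsto_const_nhds : Tendsto (fun _ : ℕ => L) atTop (nhds L)).sub h1).add h2)
      simpa using h3
    obtain ⟨K, hK⟩ := (hD.eventually_lt_const hε).exists
    refine ⟨n (K+1), fun N hN => ?_⟩
    have hK1N : K + 1 ≤ N := le_trans hnmono.le_apply hN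
    obtain ⟨M, hMdef⟩ : ∃ M, Nat.findGreatest (fun m => n m ≤ N) N = M := ⟨_, rfl⟩
    have hPM : n M ≤ N := by
      rw [← hMdef]; exact Nat.findGreatest_spec (P := fun m => n m ≤ N) hK1N hN
    have hMge : K + 1 ≤ M := by
      rw [← hMdef]; exact Nat.le_findGreatest hK1N hN
    have hM1 : N < n (M+1) := by
      by_cases h : M + 1 ≤ N
      · by_contra h'
        push_neg at h'
        exact Nat.findGreatest_is_greatest (P := fun m => n m ≤ N)
          (by rw [hMdef]; omega) h h'
      · push_neg at h
        have : M + 1 ≤ n (M+1) := hnmono.le_apply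
        omega
    obtain ⟨k, rfl⟩ : ∃ k, M = k + 1 := ⟨M - 1, by omega⟩
    have hkey := key k N hPM hM1
    have hDanti : (L - s (k+1)) + 2 * (1/2:ℝ)^k ≤ (L - s (K+1)) + 2 * (1/2:ℝ)^K := by
      have hs1 : s (K+1) ≤ s (k+1) := hsmono (by omega)
      have hp1 : ((1:ℝ)/2)^k ≤ (1/2:ℝ)^K :=
        pow_le_pow_of_le_one (by norm_num) (by norm_num) (by omega)
      linarith
    rw [Real.dist_eq]
    exact lt_of_le_of_lt (le_trans hkey hDanti) hK
  -- assemble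
  refine ⟨A', fun k => memF_of_tendsto (hA'F k), ?_, hA'disj, memF_of_tendsto hTF, ?_, ?_, ?_⟩
  · intro k
    have hsub : symmDiff (A k) (A' k) ⊆ symmDiff (A k) (B k) ∪ symmDiff (B k) (A' k) :=
      symmDiff_triangle (A k) (B k) (A' k)
    exact isNull_mono hsub (isNull_union (hsymmAB k) (hsymmBA' k))
  · calc nu (⋃ k, A' k) = L := nu_eq_of_tendsto hTF
      _ = ∑' k, nu (A' k) := by
        rw [hLdef]
        exact (tsum_congr hnuA').symm
  · intro k
    refine isNull_mono (fun x hx => ?_) isNull_empty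
    exact absurd (Set.mem_iUnion.2 ⟨k, hx.1⟩) hx.2
  · intro Bset hB
    have hW : ∀ K, Tendsto (avg (T \ V K)) atTop (nhds (L - s K)) := by
      intro K
      have heq : ∀ N, avg (T \ V K) N = avg T N - avg (V K) N := by
        intro N
        have hdd : Disjoint (V K) (T \ V K) := Set.disjoint_sdiff_right
        have hcup : V K ∪ (T \ V K) = T := Set.union_diff_cancel (hVsubT K)
        have h4 := avg_union_disjoint hdd N
        rw [hcup] at h4
        linarith
      rw [funext heq]
      exact hTF.sub (hVF K)
    show Tendsto (avg (T \ Bset)) atTop (nhds 0)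
    apply tendsto_order.2
    constructor
    · intro a ha
      exact Filter.Eventually.of_forall (fun N => lt_of_lt_of_le ha (avg_nonneg _ N))
    · intro a ha
      have hh : Tendsto (fun K => L - s K) atTop (nhds 0) := by
        have h5 : Tendsto (fun K : ℕ => L - s K) atTop (nhds (L - L)) :=
          (tendsto_const_nhds : Tendsto (fun _ : ℕ => L) atTop (nhds L)).sub hsL
        simpa using h5
      obtain ⟨K, hK⟩ := (hh.eventually_lt_const ha).exists
      have hVB : IsNull (V K \ Bset) := by
        refine isNull_mono (fun x hx => ?_) (isNull_biUnion K (fun j _ => hB j))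
        obtain ⟨hxV, hxB⟩ := hx
        simp only [hVdef, Set.mem_iUnion, Finset.mem_range] at hxV
        obtain ⟨j, hj, hxj⟩ := hxV
        exact Set.mem_biUnion (Finset.mem_range.2 hj) (⟨hxj, hxB⟩ : x ∈ A' j \ Bset)
      have hg : Tendsto (fun N => avg (V K \ Bset) N + avg (T \ V K) N) atTop
          (nhds (0 + (L - s K))) := hVB.add (hW K)
      have hga : (0:ℝ) + (L - s K) < a := by linarith
      have hev := hg.eventually_lt_const hga
      filter_upwards [hev] with N hN
      have hle : avg (T \ Bset) N ≤ avg (V K \ Bset) N + avg (T \ V K) N := by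
        refine le_trans (avg_mono ?_ N) (avg_union_le _ _ N)
        intro x hx
        by_cases hxV : x ∈ V K
        · exact Or.inl ⟨hxV, hx.2⟩
        · exact Or.inr ⟨hx.1, hxV⟩
      exact lt_of_le_of_lt hle hN
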